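/- Let ρ ∈ (-∞, 1) and suppose the price curves g take the form g_j(y) = q_j·y^{1-ρ} for each good j, for some nonnegative constants q_1,…,q_m. If (x, g) is a price curve equilibrium, then x ∈ Ψ_ρ(u), i.e., x maximizes CES welfare with parameter ρ among all valid allocations. -/

import Mathlib

open scoped Classical
open Real

namespace BandwidthAlloc

/-- A bid: `none` denotes the special bid β; `some r` denotes the real bid `r ≥ 0`. -/
abbrev Bid := Option NNReal

/-- Numeric value of a bid (β is treated as 0 in arithmetic). -/
noncomputable def bval (b : Bid) : ℝ := ((b.getD 0 : NNReal) : ℝ)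

/-- A bid is positive when it is neither 0 nor β. -/
def posBid (b : Bid) : Prop := 0 < bval b

/-- Utility of the bundle `xi` for an agent with desired set `Ri`: `min_{j ∈ Ri} xi j`. -/
noncomputable def bundleUtil {m : ℕ} (Ri : Finset (Fin m)) (xi : Fin m → ℝ) : ℝ :=
  sInf (xi '' (Ri : Set (Fin m)))

/-- Bandwidth-allocation utility of agent `i` under allocation `x`. -/
noncomputable def util {n m : ℕ} (R : Fin n → Finset (Fin m))
    (x : Fin n → Fin m → ℝ) (i : Fin n) : ℝ :=
  bundleUtil (R i) (x i)

/-- Weights: `w R i j = 1` iff `j ∈ R i`, else `0`. -/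
noncomputable def w {n m : ℕ} (R : Fin n → Finset (Fin m)) (i : Fin n) (j : Fin m) : ℝ :=
  if j ∈ R i then 1 else 0

/-- A valid (nonnegative, supply-respecting) allocation. -/
def validAlloc {n m : ℕ} (s : Fin m → ℝ) (x : Fin n → Fin m → ℝ) : Prop :=
  (∀ i j, 0 ≤ x i j) ∧ ∀ j, ∑ i, x i j ≤ s j

/-- CES welfare of the utility vector `v` (`ρ = 0` is Nash welfare; for `ρ < 0` a zero
utility yields welfare `0`, the limiting convention). -/
noncomputable def ces (ρ : ℝ) {n : ℕ} (v : Fin n → ℝ) : ℝ :=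
  if ρ = 0 then ∏ i, v i
  else if ρ < 0 ∧ ∃ i, v i = 0 then 0
  else (∑ i, v i ^ ρ) ^ (1 / ρ)

/-- `Ψ_ρ`: `x` is a valid allocation maximizing CES welfare among valid allocations. -/
def maxCES (ρ : ℝ) {n m : ℕ} (s : Fin m → ℝ) (R : Fin n → Finset (Fin m))
    (x : Fin n → Fin m → ℝ) : Prop :=
  validAlloc s x ∧ ∀ y, validAlloc s y → ces ρ (util R y) ≤ ces ρ (util R x)

/-- Constraint curve: continuous, normalized, strictly increasing, nonnegative on `[0,∞)`. -/
def IsConstraintCurve (f : ℝ → ℝ) : Prop :=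
  ContinuousOn f (Set.Ici 0) ∧ f 0 = 0 ∧ StrictMonoOn f (Set.Ici 0) ∧
    ∀ y ∈ Set.Ici (0 : ℝ), 0 ≤ f y

/-- `g` is identically zero on `[0,∞)`. -/
def zeroOn (g : ℝ → ℝ) : Prop := ∀ y ∈ Set.Ici (0 : ℝ), g y = 0

/-- Price curve: continuous, normalized, nonnegative, and either strictly increasing or
identically zero on `[0,∞)`. -/
def IsPriceCurve (g : ℝ → ℝ) : Prop :=
  ContinuousOn g (Set.Ici 0) ∧ g 0 = 0 ∧ (∀ y ∈ Set.Ici (0 : ℝ), 0 ≤ g y) ∧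
    (StrictMonoOn g (Set.Ici 0) ∨ zeroOn g)

/-- Cost of the bundle `xi` under price curves `g`. -/
noncomputable def cost {m : ℕ} (g : Fin m → ℝ → ℝ) (xi : Fin m → ℝ) : ℝ :=
  ∑ j, g j (xi j)

/-- `xi` is in the demand set of an agent with desired set `Ri` under price curves `g`. -/
def inDemand {m : ℕ} (g : Fin m → ℝ → ℝ) (Ri : Finset (Fin m)) (xi : Fin m → ℝ) : Prop :=
  (∀ j, 0 ≤ xi j) ∧ cost g xi ≤ 1 ∧
    ∀ yi : Fin m → ℝ, (∀ j, 0 ≤ yi j) → cost g yi ≤ 1 → bundleUtil Ri yi ≤ bundleUtil Ri xi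

/-- Price curve equilibrium. -/
def isPCE {n m : ℕ} (s : Fin m → ℝ) (R : Fin n → Finset (Fin m))
    (x : Fin n → Fin m → ℝ) (g : Fin m → ℝ → ℝ) : Prop :=
  (∀ i, inDemand g (R i) (x i)) ∧ (∀ j, ∑ i, x i j ≤ s j) ∧
    ∀ j, ¬ zeroOn (g j) → ∑ i, x i j = s j

/-- Step 1 of the ATP allocation rule: proportional sharing. -/
noncomputable def atp1 {n m : ℕ} (s : Fin m → ℝ) (b : Fin n → Fin m → Bid)
    (i : Fin n) (j : Fin m) : ℝ :=
  bval (b i j) / (∑ k, bval (b k j)) * s j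

/-- Steps 1–2 of the ATP allocation rule: goods with a positive bid are shared
proportionally; on a good where everyone bids `0` or `β`, an agent bidding `β` receives
as much as she receives of some fixed good on which she bids positively. -/
noncomputable def atp2 {n m : ℕ} (s : Fin m → ℝ) (b : Fin n → Fin m → Bid)
    (i : Fin n) (j : Fin m) : ℝ :=
  if ∃ k, posBid (b k j) then atp1 s b i j
  else if b i j = none then
    (if h : ∃ ℓ, posBid (b i ℓ) then atp1 s b i (Classical.choose h) else 0)
  else 0

/-- The full ATP allocation rule (steps 1–3): agents bidding `β` on an oversubscribed
step-2 good are penalized with the zero bundle. -/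
noncomputable def atp {n m : ℕ} (s : Fin m → ℝ) (b : Fin n → Fin m → Bid)
    (i : Fin n) (j : Fin m) : ℝ :=
  if ∃ ℓ, (¬ ∃ k, posBid (b k ℓ)) ∧ b i ℓ = none ∧ s ℓ < ∑ k, atp2 s b k ℓ then 0
  else atp2 s b i j

/-- Total bid-constraint cost `C_f(b_i)` of agent `i`'s bid vector. -/
noncomputable def bidCost {m : ℕ} (f : Fin m → ℝ → ℝ) (bi : Fin m → Bid) : ℝ :=
  ∑ j, f j (bval (bi j))

/-- A bid vector is feasible if it obeys the bid constraint `C_f(b_i) ≤ 1`. -/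
def feasibleBid {m : ℕ} (f : Fin m → ℝ → ℝ) (bi : Fin m → Bid) : Prop :=
  bidCost f bi ≤ 1

/-- `b` is a Nash equilibrium of `ATP(f)`: all bids are feasible and no agent can
strictly increase her utility by a unilateral feasible deviation. -/
def isNE {n m : ℕ} (s : Fin m → ℝ) (f : Fin m → ℝ → ℝ)
    (R : Fin n → Finset (Fin m)) (b : Fin n → Fin m → Bid) : Prop :=
  (∀ i, feasibleBid f (b i)) ∧
    ∀ (i : Fin n) (bi' : Fin m → Bid), feasibleBid f bi' →
      util R (atp s (Function.update b i bi')) i ≤ util R (atp s b) i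

/-- `NE_X(ATP(f))`: allocations arising from Nash equilibrium bid profiles. -/
def NEX {n m : ℕ} (s : Fin m → ℝ) (f : Fin m → ℝ → ℝ)
    (R : Fin n → Finset (Fin m)) : Set (Fin n → Fin m → ℝ) :=
  {x | ∃ b, isNE s f R b ∧ x = atp s b}

/-- `f` is homogeneous of degree `α` on the nonnegative reals. -/
def Homog (f : ℝ → ℝ) (α : ℝ) : Prop :=
  ∀ c ≥ (0 : ℝ), ∀ y ≥ (0 : ℝ), f (c * y) = c ^ α * f y

/-- `γ* = max {γ ≥ 0 : γ · Σ_i w_{ij} ≤ s_j for all j}` of Mechanism 1. -/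
noncomputable def gammaStar {n m : ℕ} (s : Fin m → ℝ) (R : Fin n → Finset (Fin m)) : ℝ :=
  sSup {γ : ℝ | 0 ≤ γ ∧ ∀ j, γ * ∑ i, w R i j ≤ s j}

/-- Mechanism 1: `x i j = γ* · w i j`. -/
noncomputable def mech1 {n m : ℕ} (s : Fin m → ℝ) (R : Fin n → Finset (Fin m)) :
    Fin n → Fin m → ℝ :=
  fun i j => gammaStar s R * w R i j

/-- `min_i u_i(x_i)`. -/
noncomputable def minUtil {n m : ℕ} (R : Fin n → Finset (Fin m))
    (x : Fin n → Fin m → ℝ) : ℝ :=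
  sInf (Set.range fun i => util R x i)

/-- `x` is maxmin-optimal: valid and attaining the maximum of `min_i u_i` over valid
allocations. -/
def maxminOptimal {n m : ℕ} (s : Fin m → ℝ) (R : Fin n → Finset (Fin m))
    (x : Fin n → Fin m → ℝ) : Prop :=
  validAlloc s x ∧ ∀ y, validAlloc s y → minUtil R y ≤ minUtil R x

/-- Mechanism 2: `P i k` is the set agent `i` claims agent `k` desires.
`eta P i = |{k : R_k(k) ≠ R_k(i)}|`. -/
noncomputable def eta {n m : ℕ} (P : Fin n → Fin n → Finset (Fin m)) (i : Fin n) : ℕ :=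
  (Finset.univ.filter fun k => P k k ≠ P i k).card

/-- Agent `i` is in `N̄`: for some `k`, `R_k(k) ⊊ R_k(i)`. -/
def inNbar {n m : ℕ} (P : Fin n → Fin n → Finset (Fin m)) (i : Fin n) : Prop :=
  ∃ k, P k k ⊂ P i k

/-- The penalty factor `α_i` of Mechanism 2. -/
noncomputable def alpha {n m : ℕ} (P : Fin n → Fin n → Finset (Fin m)) (i : Fin n) : ℝ :=
  if inNbar P i then 0 else 1 - (eta P i : ℝ) / n

/-- Effective reported sets of Mechanism 2: agents in `N̄` are replaced by `∅`. -/
noncomputable def effSets {n m : ℕ} (P : Fin n → Fin n → Finset (Fin m)) :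
    Fin n → Finset (Fin m) :=
  fun i => if inNbar P i then ∅ else P i i

/-- Mechanism 2: the allocation `x_i = α_i · y_i` where `y` is the Mechanism 1 outcome
on the effective sets. -/
noncomputable def mech2 {n m : ℕ} (s : Fin m → ℝ) (P : Fin n → Fin n → Finset (Fin m)) :
    Fin n → Fin m → ℝ :=
  fun i j => alpha P i * mech1 s (effSets P) i j

/-!
With prices `q_j y^(1-ρ)`, the cheapest way for agent `i` to reach utility `u` is to buy `u` of
every desired good, at cost `Q_i u^(1-ρ)` where `Q_i = ∑_{j ∈ R_i} q_j`. Hence in a demanded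
bundle `Q_i u_i^(1-ρ) = 1`, i.e. `Q_i = u_i^(ρ-1)`, and the agent pays exactly `Q_i u_i` at the
linear prices `q`. Summing over agents, market clearing shows that `x` maximizes the linear welfare
`∑_i u_i^(ρ-1) u_i(y)` over valid allocations `y`. Since `u_i^(ρ-1)` is the gradient at `u(x)`
of the concave function `∑_i u_i^ρ / ρ` (of `∑_i log u_i` when `ρ = 0`), this first-order
condition makes `x` a maximizer of CES welfare.
-/

section Bundles

variable {m : ℕ} {Ri : Finset (Fin m)} {xi : Fin m → ℝ}

lemma bundleUtil_le {j : Fin m} (hj : j ∈ Ri) : bundleUtil Ri xi ≤ xi j :=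
  csInf_le ((Ri : Set (Fin m)).toFinite.image xi).bddBelow ⟨j, hj, rfl⟩

lemma le_bundleUtil {c : ℝ} (hR : Ri.Nonempty) (h : ∀ j ∈ Ri, c ≤ xi j) :
    c ≤ bundleUtil Ri xi :=
  le_csInf ((Finset.coe_nonempty.2 hR).image xi) (Set.forall_mem_image.2 h)

lemma bundleUtil_nonneg (hR : Ri.Nonempty) (hx : ∀ j, 0 ≤ xi j) : 0 ≤ bundleUtil Ri xi :=
  le_bundleUtil hR fun j _ => hx j

def levelBundle (Ri : Finset (Fin m)) (c : ℝ) : Fin m → ℝ :=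
  fun j => if j ∈ Ri then c else 0

lemma levelBundle_nonneg {c : ℝ} (hc : 0 ≤ c) (j : Fin m) : 0 ≤ levelBundle Ri c j := by
  unfold levelBundle; split_ifs <;> simp [hc]

lemma bundleUtil_levelBundle (hR : Ri.Nonempty) (c : ℝ) :
    bundleUtil Ri (levelBundle Ri c) = c := by
  obtain ⟨j, hj⟩ := hR
  exact le_antisymm ((bundleUtil_le hj).trans_eq (if_pos hj))
    (le_bundleUtil ⟨j, hj⟩ fun k hk => (if_pos hk).ge)

lemma levelBundle_bundleUtil_le (hx : ∀ j, 0 ≤ xi j) (j : Fin m) :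
    levelBundle Ri (bundleUtil Ri xi) j ≤ xi j := by
  unfold levelBundle
  split_ifs with hj
  · exact bundleUtil_le hj
  · exact hx j

lemma levelBundle_rpow {e : ℝ} (he : e ≠ 0) (c : ℝ) (j : Fin m) :
    levelBundle Ri c j ^ e = levelBundle Ri (c ^ e) j := by
  unfold levelBundle
  split_ifs <;> simp [Real.zero_rpow he]

lemma sum_mul_levelBundle (q : Fin m → ℝ) (c : ℝ) :
    ∑ j, q j * levelBundle Ri c j = (∑ j ∈ Ri, q j) * c := by
  simp [levelBundle, mul_ite, Finset.sum_ite_mem, Finset.sum_mul]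

lemma sum_mul_bundleUtil_le {q : Fin m → ℝ} (hq : ∀ j, 0 ≤ q j) (hx : ∀ j, 0 ≤ xi j) :
    (∑ j ∈ Ri, q j) * bundleUtil Ri xi ≤ ∑ j, q j * xi j := by
  rw [← sum_mul_levelBundle]
  exact Finset.sum_le_sum fun j _ =>
    mul_le_mul_of_nonneg_left (levelBundle_bundleUtil_le hx j) (hq j)

end Bundles

section PowerPrices

variable {m : ℕ} {Ri : Finset (Fin m)} {xi : Fin m → ℝ} {q : Fin m → ℝ} {e : ℝ}

lemma cost_levelBundle (he : e ≠ 0) (c : ℝ) :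
    cost (fun j y => q j * y ^ e) (levelBundle Ri c) = (∑ j ∈ Ri, q j) * c ^ e := by
  simp only [cost, levelBundle_rpow he, sum_mul_levelBundle]

lemma mul_rpow_levelBundle_le (hq : ∀ j, 0 ≤ q j) (he : 0 ≤ e) (hR : Ri.Nonempty)
    (hx : ∀ j, 0 ≤ xi j) (j : Fin m) :
    q j * levelBundle Ri (bundleUtil Ri xi) j ^ e ≤ q j * xi j ^ e :=
  mul_le_mul_of_nonneg_left (Real.rpow_le_rpow
    (levelBundle_nonneg (bundleUtil_nonneg hR hx) j) (levelBundle_bundleUtil_le hx j) he) (hq j)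

lemma inDemand.sum_pos (hq : ∀ j, 0 ≤ q j) (he : e ≠ 0) (hR : Ri.Nonempty)
    (hx : inDemand (fun j y => q j * y ^ e) Ri xi) : 0 < ∑ j ∈ Ri, q j := by
  refine (Finset.sum_nonneg fun j _ => hq j).lt_of_ne' fun hQ => ?_
  have hu := bundleUtil_nonneg hR hx.1
  have := hx.2.2 (levelBundle Ri (bundleUtil Ri xi + 1)) (levelBundle_nonneg (by linarith))
    (by rw [cost_levelBundle he, hQ, zero_mul]; exact zero_le_one)
  rw [bundleUtil_levelBundle hR] at this
  linarith

lemma inDemand.sum_mul_rpow_eq_one (hq : ∀ j, 0 ≤ q j) (he : 0 < e) (hR : Ri.Nonempty)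
    (hx : inDemand (fun j y => q j * y ^ e) Ri xi) :
    (∑ j ∈ Ri, q j) * bundleUtil Ri xi ^ e = 1 := by
  set Q := ∑ j ∈ Ri, q j
  have hQ : 0 < Q := hx.sum_pos hq he.ne' hR
  set c := Q⁻¹ ^ e⁻¹
  have hc : Q * c ^ e = 1 := by
    rw [← Real.rpow_mul (inv_nonneg.2 hQ.le), inv_mul_cancel₀ he.ne', Real.rpow_one,
      mul_inv_cancel₀ hQ.ne']
  have hcu : c ≤ bundleUtil Ri xi := by
    simpa only [bundleUtil_levelBundle hR] using hx.2.2 (levelBundle Ri c)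
      (levelBundle_nonneg (by positivity)) (by rw [cost_levelBundle he.ne', hc])
  apply le_antisymm
  · calc Q * bundleUtil Ri xi ^ e
        = cost (fun j y => q j * y ^ e) (levelBundle Ri (bundleUtil Ri xi)) :=
          (cost_levelBundle he.ne' _).symm
      _ ≤ cost (fun j y => q j * y ^ e) xi :=
          Finset.sum_le_sum fun j _ => mul_rpow_levelBundle_le hq he.le hR hx.1 j
      _ ≤ 1 := hx.2.1
  · calc 1 = Q * c ^ e := hc.symm
      _ ≤ Q * bundleUtil Ri xi ^ e := by gcongr

lemma inDemand.bundleUtil_pos (hq : ∀ j, 0 ≤ q j) (he : 0 < e) (hR : Ri.Nonempty)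
    (hx : inDemand (fun j y => q j * y ^ e) Ri xi) : 0 < bundleUtil Ri xi := by
  refine (bundleUtil_nonneg hR hx.1).lt_of_ne' fun hu => ?_
  simpa [hu, Real.zero_rpow he.ne'] using hx.sum_mul_rpow_eq_one hq he hR

lemma inDemand.sum_eq_rpow_neg (hq : ∀ j, 0 ≤ q j) (he : 0 < e) (hR : Ri.Nonempty)
    (hx : inDemand (fun j y => q j * y ^ e) Ri xi) :
    ∑ j ∈ Ri, q j = bundleUtil Ri xi ^ (-e) := by
  rw [Real.rpow_neg (bundleUtil_nonneg hR hx.1)]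
  exact eq_inv_of_mul_eq_one_left (hx.sum_mul_rpow_eq_one hq he hR)

lemma inDemand.sum_mul_eq (hq : ∀ j, 0 ≤ q j) (he : 0 < e) (hR : Ri.Nonempty)
    (hx : inDemand (fun j y => q j * y ^ e) Ri xi) :
    ∑ j, q j * xi j = (∑ j ∈ Ri, q j) * bundleUtil Ri xi := by
  set u := bundleUtil Ri xi
  have hu : 0 ≤ u := bundleUtil_nonneg hR hx.1
  -- the cheapest bundle of utility `u` already exhausts the budget, so `xi` can exceed it
  -- only on free goods
  have hle : ∀ j ∈ Finset.univ, q j * levelBundle Ri u j ^ e ≤ q j * xi j ^ e :=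
    fun j _ => mul_rpow_levelBundle_le hq he.le hR hx.1 j
  have hcost : ∀ j ∈ Finset.univ, q j * levelBundle Ri u j ^ e = q j * xi j ^ e := by
    refine (Finset.sum_eq_sum_iff_of_le hle).1 (le_antisymm (Finset.sum_le_sum hle) ?_)
    calc cost (fun j y => q j * y ^ e) xi ≤ 1 := hx.2.1
      _ = cost (fun j y => q j * y ^ e) (levelBundle Ri u) := by
        rw [cost_levelBundle he.ne', hx.sum_mul_rpow_eq_one hq he hR]
  have hspend : ∀ j, q j * xi j = q j * levelBundle Ri u j := by
    intro j
    rcases (hq j).eq_or_lt with h | h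
    · simp [← h]
    · rw [(Real.rpow_left_inj (hx.1 j) (levelBundle_nonneg hu j) he.ne').1
        (mul_left_cancel₀ h.ne' (hcost j (Finset.mem_univ j))).symm]
  rw [Finset.sum_congr rfl fun j _ => hspend j, sum_mul_levelBundle]

end PowerPrices

section Market

variable {n m : ℕ} {s : Fin m → ℝ} {R : Fin n → Finset (Fin m)} {q : Fin m → ℝ}

lemma sum_mul_util_le (hq : ∀ j, 0 ≤ q j) {y : Fin n → Fin m → ℝ} (hy : validAlloc s y) :
    ∑ i, (∑ j ∈ R i, q j) * util R y i ≤ ∑ j, q j * s j :=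
  calc ∑ i, (∑ j ∈ R i, q j) * util R y i ≤ ∑ i, ∑ j, q j * y i j :=
        Finset.sum_le_sum fun i _ => sum_mul_bundleUtil_le hq (hy.1 i)
    _ = ∑ j, q j * ∑ i, y i j := by rw [Finset.sum_comm]; simp_rw [Finset.mul_sum]
    _ ≤ ∑ j, q j * s j := Finset.sum_le_sum fun j _ => mul_le_mul_of_nonneg_left (hy.2 j) (hq j)

lemma isPCE.sum_mul_supply {e : ℝ} {x : Fin n → Fin m → ℝ}
    (hx : isPCE s R x (fun j y => q j * y ^ e)) :
    ∑ j, q j * s j = ∑ i, ∑ j, q j * x i j := by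
  rw [Finset.sum_comm]
  simp_rw [← Finset.mul_sum]
  refine Finset.sum_congr rfl fun j _ => ?_
  rcases eq_or_ne (q j) 0 with h | h
  · simp [h]
  · rw [hx.2.2 j fun hz => h (by simpa using hz 1 (Set.mem_Ici.2 zero_le_one))]

end Market

section RpowTangent

variable {ρ a b : ℝ}

lemma one_add_mul_sub_le_rpow_of_nonpos {t : ℝ} (ht : 0 < t) (hρ : ρ ≤ 0) :
    1 + ρ * (t - 1) ≤ t ^ ρ :=
  calc 1 + ρ * (t - 1) ≤ 1 + ρ * Real.log t := by
        linarith [mul_le_mul_of_nonpos_left (Real.log_le_sub_one_of_pos ht) hρ]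
    _ ≤ t ^ ρ := by
        rw [Real.rpow_def_of_pos ht, add_comm, mul_comm]; exact Real.add_one_le_exp _

lemma rpow_tangent_eq (ha : 0 < a) :
    a ^ ρ + ρ * a ^ (ρ - 1) * (b - a) = a ^ ρ * (1 + ρ * (b / a - 1)) := by
  rw [Real.rpow_sub_one ha.ne']
  field_simp

lemma rpow_le_add_mul_sub (hρ₀ : 0 ≤ ρ) (hρ₁ : ρ ≤ 1) (ha : 0 < a) (hb : 0 ≤ b) :
    b ^ ρ ≤ a ^ ρ + ρ * a ^ (ρ - 1) * (b - a) := by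
  have key := rpow_one_add_le_one_add_mul_self (s := b / a - 1)
    (by linarith [div_nonneg hb ha.le]) hρ₀ hρ₁
  rw [add_sub_cancel, Real.div_rpow hb ha.le, div_le_iff₀' (by positivity)] at key
  rwa [rpow_tangent_eq ha]

lemma add_mul_sub_le_rpow (hρ : ρ ≤ 0) (ha : 0 < a) (hb : 0 < b) :
    a ^ ρ + ρ * a ^ (ρ - 1) * (b - a) ≤ b ^ ρ := by
  have key := one_add_mul_sub_le_rpow_of_nonpos (div_pos hb ha) hρ
  rw [Real.div_rpow hb.le ha.le, le_div_iff₀' (by positivity)] at key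
  rwa [rpow_tangent_eq ha]

end RpowTangent

section Welfare

variable {n : ℕ} {ρ : ℝ} {a b : Fin n → ℝ}

lemma ces_zero (v : Fin n → ℝ) : ces 0 v = ∏ i, v i := if_pos rfl

lemma ces_of_pos (hρ : 0 < ρ) (v : Fin n → ℝ) : ces ρ v = (∑ i, v i ^ ρ) ^ (1 / ρ) := by
  simp [ces, hρ.ne', hρ.not_gt]

lemma ces_of_neg (hρ : ρ < 0) {v : Fin n → ℝ} (hv : ∀ i, v i ≠ 0) :
    ces ρ v = (∑ i, v i ^ ρ) ^ (1 / ρ) := by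
  simp [ces, hρ.ne, hv]

lemma ces_le_ces_of_pos (hρ₀ : 0 < ρ) (hρ₁ : ρ < 1) (ha : ∀ i, 0 < a i) (hb : ∀ i, 0 ≤ b i)
    (h : ∑ i, a i ^ (ρ - 1) * (b i - a i) ≤ 0) : ces ρ b ≤ ces ρ a := by
  have hsum : ∑ i, b i ^ ρ ≤ ∑ i, a i ^ ρ :=
    calc ∑ i, b i ^ ρ ≤ ∑ i, (a i ^ ρ + ρ * a i ^ (ρ - 1) * (b i - a i)) :=
          Finset.sum_le_sum fun i _ => rpow_le_add_mul_sub hρ₀.le hρ₁.le (ha i) (hb i)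
      _ = ∑ i, a i ^ ρ + ρ * ∑ i, a i ^ (ρ - 1) * (b i - a i) := by
          rw [Finset.sum_add_distrib, Finset.mul_sum]; simp_rw [mul_assoc]
      _ ≤ ∑ i, a i ^ ρ := add_le_of_nonpos_right (mul_nonpos_of_nonneg_of_nonpos hρ₀.le h)
  rw [ces_of_pos hρ₀, ces_of_pos hρ₀]
  exact Real.rpow_le_rpow (Finset.sum_nonneg fun i _ => Real.rpow_nonneg (hb i) ρ) hsum
    (by positivity)

lemma ces_le_ces_of_neg (hρ : ρ < 0) (ha : ∀ i, 0 < a i) (hb : ∀ i, 0 ≤ b i)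
    (h : ∑ i, a i ^ (ρ - 1) * (b i - a i) ≤ 0) : ces ρ b ≤ ces ρ a := by
  rcases isEmpty_or_nonempty (Fin n) with _ | _
  · rw [Subsingleton.elim b a]
  rw [ces_of_neg hρ fun i => (ha i).ne']
  by_cases hb₀ : ∃ i, b i = 0
  · rw [show ces ρ b = 0 by simp [ces, hρ.ne, hρ, hb₀]]
    exact Real.rpow_nonneg (Finset.sum_nonneg fun i _ => Real.rpow_nonneg (ha i).le ρ) _
  push Not at hb₀
  have hsum : ∑ i, a i ^ ρ ≤ ∑ i, b i ^ ρ :=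
    calc ∑ i, a i ^ ρ ≤ ∑ i, a i ^ ρ + ρ * ∑ i, a i ^ (ρ - 1) * (b i - a i) :=
          le_add_of_nonneg_right (mul_nonneg_of_nonpos_of_nonpos hρ.le h)
      _ = ∑ i, (a i ^ ρ + ρ * a i ^ (ρ - 1) * (b i - a i)) := by
          rw [Finset.sum_add_distrib, Finset.mul_sum]; simp_rw [mul_assoc]
      _ ≤ ∑ i, b i ^ ρ := Finset.sum_le_sum fun i _ =>
          add_mul_sub_le_rpow hρ.le (ha i) ((hb i).lt_of_ne' (hb₀ i))
  rw [ces_of_neg hρ hb₀]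
  exact Real.rpow_le_rpow_of_nonpos
    (Finset.sum_pos (fun i _ => Real.rpow_pos_of_pos (ha i) ρ) Finset.univ_nonempty) hsum
    (one_div_nonpos.2 hρ.le)

lemma ces_zero_le_ces_zero (ha : ∀ i, 0 < a i) (hb : ∀ i, 0 ≤ b i)
    (h : ∑ i, (b i - a i) / a i ≤ 0) : ces 0 b ≤ ces 0 a := by
  rw [ces_zero, ces_zero]
  by_cases hb₀ : ∃ i, b i = 0
  · rw [Finset.prod_eq_zero_iff.2 (by simpa using hb₀)]
    exact Finset.prod_nonneg fun i _ => (ha i).le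
  push Not at hb₀
  have hb' : ∀ i, 0 < b i := fun i => (hb i).lt_of_ne' (hb₀ i)
  have hlog : ∀ i, Real.log (b i) - Real.log (a i) ≤ (b i - a i) / a i := fun i =>
    calc Real.log (b i) - Real.log (a i) = Real.log (b i / a i) :=
          (Real.log_div (hb₀ i) (ha i).ne').symm
      _ ≤ b i / a i - 1 := Real.log_le_sub_one_of_pos (div_pos (hb' i) (ha i))
      _ = (b i - a i) / a i := by rw [sub_div, div_self (ha i).ne']
  rw [← Real.log_le_log_iff (Finset.prod_pos fun i _ => hb' i) (Finset.prod_pos fun i _ => ha i),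
    Real.log_prod fun i _ => hb₀ i, Real.log_prod fun i _ => (ha i).ne']
  calc ∑ i, Real.log (b i)
      = ∑ i, Real.log (a i) + ∑ i, (Real.log (b i) - Real.log (a i)) := by
        rw [Finset.sum_sub_distrib]; ring
    _ ≤ ∑ i, Real.log (a i) + ∑ i, (b i - a i) / a i := by gcongr with i; exact hlog i
    _ ≤ ∑ i, Real.log (a i) := add_le_of_nonpos_right h

theorem ces_le_ces_of_sum_rpow_mul_sub_nonpos (hρ : ρ < 1) (ha : ∀ i, 0 < a i)
    (hb : ∀ i, 0 ≤ b i) (h : ∑ i, a i ^ (ρ - 1) * (b i - a i) ≤ 0) : ces ρ b ≤ ces ρ a := by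
  rcases lt_trichotomy ρ 0 with hρ₀ | rfl | hρ₀
  · exact ces_le_ces_of_neg hρ₀ ha hb h
  · exact ces_zero_le_ces_zero ha hb (by simpa [Real.rpow_neg_one, div_eq_inv_mul] using h)
  · exact ces_le_ces_of_pos hρ₀ hρ ha hb h

end Welfare

theorem ces_sufficient_general {n m : ℕ} (s : Fin m → ℝ)
    (R : Fin n → Finset (Fin m)) (hR : ∀ i, (R i).Nonempty)
    (ρ : ℝ) (hρ : ρ < 1)
    (q : Fin m → ℝ) (hq : ∀ j, 0 ≤ q j)
    (x : Fin n → Fin m → ℝ)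
    (hx : isPCE s R x (fun j y => q j * y ^ (1 - ρ))) :
    maxCES ρ s R x := by
  have he : 0 < 1 - ρ := sub_pos.2 hρ
  have hdem := hx.1
  have hweight : ∀ i, ∑ j ∈ R i, q j = util R x i ^ (ρ - 1) := fun i => by
    rw [(hdem i).sum_eq_rpow_neg hq he (hR i), neg_sub, util]
  have hspend : ∀ i, ∑ j, q j * x i j = util R x i ^ (ρ - 1) * util R x i := fun i => by
    rw [(hdem i).sum_mul_eq hq he (hR i), hweight, util]
  refine ⟨⟨fun i => (hdem i).1, hx.2.1⟩, fun y hy => ?_⟩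
  refine ces_le_ces_of_sum_rpow_mul_sub_nonpos hρ (fun i => (hdem i).bundleUtil_pos hq he (hR i))
    (fun i => bundleUtil_nonneg (hR i) (hy.1 i)) ?_
  have hlin := sum_mul_util_le (R := R) hq hy
  rw [hx.sum_mul_supply, Finset.sum_congr rfl fun i _ => hspend i] at hlin
  simp_rw [hweight] at hlin
  simpa only [mul_sub, Finset.sum_sub_distrib, sub_nonpos] using hlin

/-- for `ρ < 1`, if `(x, g)` is a price curve equilibrium with
`g_j(y) = q_j · y^(1-ρ)` for nonnegative constants `q_j`, then `x` maximizes CES welfare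
with parameter `ρ` among valid allocations. -/
theorem ces_sufficient {n m : ℕ} (s : Fin m → ℝ) (hs : ∀ j, 0 < s j)
    (R : Fin n → Finset (Fin m)) (hR : ∀ i, (R i).Nonempty)
    (ρ : ℝ) (hρ : ρ < 1)
    (q : Fin m → ℝ) (hq : ∀ j, 0 ≤ q j)
    (x : Fin n → Fin m → ℝ)
    (hx : isPCE s R x (fun j y => q j * y ^ (1 - ρ))) :
    maxCES ρ s R x :=
  ces_sufficient_general s R hR ρ hρ q hq x hx

end BandwidthAlloc
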